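/- arXiv:1303.5667 — 2 statements merged into one kernel-verified Lean document; each statement's English description precedes it below -/
import Mathlib

section
/- In Euclidean space E = ℝ^n, with d the Euclidean metric, {x_n} a countable dense set, and d̃(x, y) := Σ_{n=1}^∞ 2^{-n} |d(x, x_n)/(1 + d(x, x_n)) − d(y, x_n)/(1 + d(y, x_n))|, for every compact set K ⊂ ℝ^n there exists C > 0 such that d(y, z) ≤ C · d̃(y, z) for all y, z ∈ K. -/
/-- The totally bounded metric built from a countable dense sequence `xs`. -/
noncomputable def dtilde {E : Type*} [MetricSpace E] (xs : ℕ → E) (x y : E) : ℝ :=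
  ∑' n : ℕ, (1/2 : ℝ)^(n+1) *
    |dist x (xs n) / (1 + dist x (xs n)) - dist y (xs n) / (1 + dist y (xs n))|

open scoped RealInnerProductSpace

/-- One coordinate is large. -/
lemma coord_big {n : ℕ} (hn : 0 < n) (v : EuclideanSpace ℝ (Fin n)) :
    ∃ i, ‖v‖ ≤ Real.sqrt n * |v i| := by
  by_contra h
  push_neg at h
  rcases eq_or_ne v 0 with hv | hv
  · exact absurd (h ⟨0, hn⟩) (by simp [hv])
  have hvpos : 0 < ‖v‖ := norm_pos_iff.2 hv
  have hsq : ∀ i, (v i)^2 < ‖v‖^2 / n := by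
    intro i
    have h1 := h i
    have hsn : (0:ℝ) < Real.sqrt n := Real.sqrt_pos.2 (by exact_mod_cast hn)
    have h2 : Real.sqrt n * |v i| < ‖v‖ := h1
    have h3 : (Real.sqrt n * |v i|)^2 < ‖v‖^2 := by
      apply sq_lt_sq' _ h2
      · nlinarith [abs_nonneg (v i), hvpos, mul_nonneg hsn.le (abs_nonneg (v i))]
    have h4 : (Real.sqrt n)^2 = n := Real.sq_sqrt (by positivity)
    have : (n:ℝ) * (v i)^2 < ‖v‖^2 := by
      calc (n:ℝ) * (v i)^2 = (Real.sqrt n * |v i|)^2 := by rw [mul_pow, h4, sq_abs]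
      _ < _ := h3
    have hn' : (0:ℝ) < n := by exact_mod_cast hn
    rw [lt_div_iff₀ hn']
    linarith
  have hsum : ‖v‖^2 = ∑ i, (v i)^2 := by
    rw [EuclideanSpace.norm_eq]
    rw [Real.sq_sqrt (by positivity)]
    simp [sq_abs, Real.norm_eq_abs]
  have : ∑ i, (v i)^2 < ∑ _i : Fin n, ‖v‖^2 / n :=
    Finset.sum_lt_sum_of_nonempty ⟨⟨0, hn⟩, Finset.mem_univ _⟩ (fun i _ => hsq i)
  simp only [Finset.sum_const, Finset.card_univ, Fintype.card_fin, nsmul_eq_mul] at this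
  have hn' : (0:ℝ) < n := by exact_mod_cast hn
  rw [mul_div_cancel₀ _ (ne_of_gt hn')] at this
  linarith [hsum]

lemma inner_ident {n : ℕ} (y z w : EuclideanSpace ℝ (Fin n)) :
    ‖y - w‖^2 - ‖z - w‖^2 = ⟪y - z, y + z⟫ - 2 * ⟪y - z, w⟫ := by
  simp only [norm_sub_sq_real, inner_sub_left, inner_add_right]
  have h1 : ⟪y, y⟫ = ‖y‖^2 := real_inner_self_eq_norm_sq y
  have h2 : ⟪z, z⟫ = ‖z‖^2 := real_inner_self_eq_norm_sq z
  have h3 : ⟪y, z⟫ = ⟪z, y⟫ := (real_inner_comm z y)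
  linarith

lemma key_sep {n : ℕ} (hn : 0 < n) {R₀ : ℝ} (hR₀ : 1 ≤ R₀)
    (x : Fin n → EuclideanSpace ℝ (Fin n))
    (hx : ∀ i, dist ((4 * Real.sqrt n * R₀) • EuclideanSpace.single i (1:ℝ)) (x i) < R₀)
    (y z : EuclideanSpace ℝ (Fin n)) (hy : ‖y‖ ≤ R₀) (hz : ‖z‖ ≤ R₀) :
    ∃ i, dist y z ≤ 3 * Real.sqrt n * |dist y (x i) - dist z (x i)| ∧
         dist y (x i) ≤ 6 * Real.sqrt n * R₀ ∧ dist z (x i) ≤ 6 * Real.sqrt n * R₀ := by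
  have hsn : (1:ℝ) ≤ Real.sqrt n := by
    rw [show (1:ℝ) = Real.sqrt 1 by simp]
    exact Real.sqrt_le_sqrt (by exact_mod_cast hn)
  have hsn0 : (0:ℝ) < Real.sqrt n := by linarith
  have hR₀0 : (0:ℝ) < R₀ := by linarith
  set R : ℝ := 4 * Real.sqrt n * R₀ with hR
  have hR0 : 0 < R := by positivity
  set v := y - z with hv
  obtain ⟨i, hi⟩ := coord_big hn v
  -- bounds on dist to x i
  have hxi : ‖x i‖ ≤ R + R₀ := by
    have h1 : ‖x i - R • EuclideanSpace.single i (1:ℝ)‖ < R₀ := by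
      rw [← dist_eq_norm, dist_comm]
      exact hx i
    have h2 : ‖R • EuclideanSpace.single i (1:ℝ)‖ = R := by
      rw [norm_smul, EuclideanSpace.norm_single]
      simp [abs_of_pos hR0]
    calc ‖x i‖ = ‖(x i - R • EuclideanSpace.single i (1:ℝ)) + R • EuclideanSpace.single i (1:ℝ)‖ := by
          rw [sub_add_cancel]
    _ ≤ ‖x i - R • EuclideanSpace.single i (1:ℝ)‖ + ‖R • EuclideanSpace.single i (1:ℝ)‖ := norm_add_le _ _
    _ ≤ R₀ + R := by linarith
    _ = R + R₀ := by ring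
  have hdy : dist y (x i) ≤ 6 * Real.sqrt n * R₀ := by
    calc dist y (x i) ≤ ‖y‖ + ‖x i‖ := by
          rw [dist_eq_norm]; exact norm_sub_le _ _
    _ ≤ R₀ + (R + R₀) := by linarith
    _ ≤ 6 * Real.sqrt n * R₀ := by
        have hmul : R₀ ≤ Real.sqrt n * R₀ := le_mul_of_one_le_left hR₀0.le hsn
        rw [hR]; linarith
  have hdz : dist z (x i) ≤ 6 * Real.sqrt n * R₀ := by
    calc dist z (x i) ≤ ‖z‖ + ‖x i‖ := by
          rw [dist_eq_norm]; exact norm_sub_le _ _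
    _ ≤ R₀ + (R + R₀) := by linarith
    _ ≤ 6 * Real.sqrt n * R₀ := by
        have hmul : R₀ ≤ Real.sqrt n * R₀ := le_mul_of_one_le_left hR₀0.le hsn
        rw [hR]; linarith
  refine ⟨i, ?_, hdy, hdz⟩
  -- the key estimate
  set a := dist y (x i) with ha
  set b := dist z (x i) with hb
  have hident : a^2 - b^2 = ⟪v, y + z⟫ - 2 * ⟪v, x i⟫ := by
    rw [ha, hb, dist_eq_norm, dist_eq_norm]
    exact inner_ident y z (x i)
  -- inner products
  have hip : ⟪v, R • EuclideanSpace.single i (1:ℝ)⟫ = R * v i := by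
    rw [real_inner_smul_right]
    have := EuclideanSpace.inner_single_right (𝕜 := ℝ) i 1 v
    simp only [RCLike.conj_to_real, starRingEnd_apply] at this
    rw [this]
    simp [mul_comm]
  have h1 : |⟪v, y + z⟫| ≤ 2 * R₀ * ‖v‖ := by
    calc |⟪v, y + z⟫| ≤ ‖v‖ * ‖y + z‖ := abs_real_inner_le_norm v _
    _ ≤ ‖v‖ * (2 * R₀) := by
        have : ‖y + z‖ ≤ 2 * R₀ := by
          calc ‖y + z‖ ≤ ‖y‖ + ‖z‖ := norm_add_le _ _
          _ ≤ 2 * R₀ := by linarith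
        exact mul_le_mul_of_nonneg_left this (norm_nonneg v)
    _ = 2 * R₀ * ‖v‖ := by ring
  have h2 : |⟪v, x i - R • EuclideanSpace.single i (1:ℝ)⟫| ≤ R₀ * ‖v‖ := by
    calc |⟪v, x i - R • EuclideanSpace.single i (1:ℝ)⟫|
        ≤ ‖v‖ * ‖x i - R • EuclideanSpace.single i (1:ℝ)‖ := abs_real_inner_le_norm v _
    _ ≤ ‖v‖ * R₀ := by
        apply mul_le_mul_of_nonneg_left _ (norm_nonneg v)
        rw [← dist_eq_norm, dist_comm]
        exact (hx i).le
    _ = R₀ * ‖v‖ := by ring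
  have h3 : 2 * R * |v i| ≥ 8 * R₀ * ‖v‖ := by
    have hstep : (8 * R₀) * ‖v‖ ≤ (8 * R₀) * (Real.sqrt n * |v i|) :=
      mul_le_mul_of_nonneg_left hi (by positivity)
    calc 8 * R₀ * ‖v‖ ≤ (8 * R₀) * (Real.sqrt n * |v i|) := hstep
    _ = 2 * R * |v i| := by rw [hR]; ring
  have hsplit : ⟪v, x i⟫ = ⟪v, x i - R • EuclideanSpace.single i (1:ℝ)⟫ + R * v i := by
    rw [← hip, ← inner_add_right]
    congr 1
    abel
  have habs3 : ∀ P Q S : ℝ, |2*S| - |P| - 2*|Q| ≤ |P - 2*(Q + S)| := by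
    intro P Q S
    rcases abs_cases P with ⟨hP, _⟩ | ⟨hP, _⟩ <;>
    rcases abs_cases Q with ⟨hQ, _⟩ | ⟨hQ, _⟩ <;>
    rcases abs_cases (2*S) with ⟨hS, _⟩ | ⟨hS, _⟩ <;>
    rcases abs_cases (P - 2*(Q + S)) with ⟨hW, _⟩ | ⟨hW, _⟩ <;>
    linarith
  have hnum : 4 * R₀ * ‖v‖ ≤ |a^2 - b^2| := by
    rw [hident, hsplit]
    calc (4:ℝ) * R₀ * ‖v‖
        ≤ |2 * (R * v i)| - |⟪v, y + z⟫| - 2 * |⟪v, x i - R • EuclideanSpace.single i (1:ℝ)⟫| := by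
          have habs : |2 * (R * v i)| = 2 * R * |v i| := by
            rw [abs_mul, abs_mul]
            simp [abs_of_pos hR0, mul_assoc]
          rw [habs]; linarith
    _ ≤ |⟪v, y + z⟫ - 2 * (⟪v, x i - R • EuclideanSpace.single i (1:ℝ)⟫ + R * v i)| :=
          habs3 _ _ _
  -- conclude
  have hfac : |a - b| * (a + b) = |a^2 - b^2| := by
    have hab : 0 ≤ a + b := by rw [ha, hb]; positivity
    rw [show a^2 - b^2 = (a - b) * (a + b) by ring, abs_mul, abs_of_nonneg hab]
  have hsum_ub : a + b ≤ 12 * Real.sqrt n * R₀ := by rw [ha, hb]; linarith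
  have hdistv : dist y z = ‖v‖ := by rw [hv, dist_eq_norm]
  rw [hdistv]
  nlinarith [abs_nonneg (a - b), hnum, hfac, hsum_ub,
    mul_le_mul_of_nonneg_left hsum_ub (abs_nonneg (a - b))]

lemma fdiff {a b M : ℝ} (ha : 0 ≤ a) (hb : 0 ≤ b) (haM : a ≤ M) (hbM : b ≤ M) :
    |a - b| ≤ (1 + M)^2 * |a/(1+a) - b/(1+b)| := by
  have h1a : (0:ℝ) < 1 + a := by linarith
  have h1b : (0:ℝ) < 1 + b := by linarith
  have hM : (0:ℝ) ≤ M := le_trans ha haM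
  have key : a/(1+a) - b/(1+b) = (a-b)/((1+a)*(1+b)) := by
    field_simp
    ring
  rw [key, abs_div, abs_of_pos (by positivity : (0:ℝ) < (1+a)*(1+b)), mul_div_assoc',
    le_div_iff₀ (by positivity : (0:ℝ) < (1+a)*(1+b))]
  have hD : (1+a)*(1+b) ≤ (1+M)^2 := by nlinarith
  calc |a - b| * ((1+a)*(1+b)) ≤ |a - b| * (1+M)^2 :=
        mul_le_mul_of_nonneg_left hD (abs_nonneg _)
  _ = (1+M)^2 * |a - b| := by ring

/-- in `ℝⁿ`, for every compact `K` there is `C > 0` with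
`d(y,z) ≤ C · d̃(y,z)` for all `y, z ∈ K`. -/
theorem stmt3 (n : ℕ) (xs : ℕ → EuclideanSpace ℝ (Fin n)) (hxs : DenseRange xs)
    (K : Set (EuclideanSpace ℝ (Fin n))) (hK : IsCompact K) :
    ∃ C > (0:ℝ), ∀ y ∈ K, ∀ z ∈ K, dist y z ≤ C * dtilde xs y z := by
  rcases Nat.eq_zero_or_pos n with hn | hn
  · subst hn
    refine ⟨1, one_pos, fun y hy z hz => ?_⟩
    have hd : dist y z = 0 := by
      rw [EuclideanSpace.dist_eq]
      simp
    have h0 : (0:ℝ) ≤ dtilde xs y z := tsum_nonneg (fun k => by positivity)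
    rw [hd]
    linarith
  · have hsn : (1:ℝ) ≤ Real.sqrt n := by
      rw [show (1:ℝ) = Real.sqrt 1 by simp]
      exact Real.sqrt_le_sqrt (by exact_mod_cast hn)
    have hsn0 : (0:ℝ) < Real.sqrt n := by linarith
    obtain ⟨r, hr⟩ := hK.isBounded.subset_closedBall 0
    set R₀ : ℝ := max r 1 with hR₀def
    have hR₀ : (1:ℝ) ≤ R₀ := le_max_right _ _
    have hR₀0 : (0:ℝ) < R₀ := lt_of_lt_of_le one_pos hR₀
    have hKb : ∀ w ∈ K, ‖w‖ ≤ R₀ := by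
      intro w hw
      have := hr hw
      rw [Metric.mem_closedBall, dist_zero_right] at this
      exact this.trans (le_max_left _ _)
    have hex : ∀ i : Fin n,
        ∃ k, dist ((4 * Real.sqrt n * R₀) • EuclideanSpace.single i (1:ℝ)) (xs k) < R₀ :=
      fun i => hxs.exists_dist_lt _ hR₀0
    choose m hm using hex
    set N : ℕ := Finset.univ.sup m with hN
    set M : ℝ := 6 * Real.sqrt n * R₀ with hM
    have hMpos : (0:ℝ) < M := by rw [hM]; positivity
    refine ⟨3 * Real.sqrt n * (1 + M)^2 * 2^(N+1), by positivity, fun y hy z hz => ?_⟩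
    obtain ⟨i, hsep, haM, hbM⟩ := key_sep hn hR₀ (fun i => xs (m i)) hm y z (hKb y hy) (hKb z hz)
    set a := dist y (xs (m i)) with ha
    set b := dist z (xs (m i)) with hb
    have ha0 : (0:ℝ) ≤ a := dist_nonneg
    have hb0 : (0:ℝ) ≤ b := dist_nonneg
    -- summability
    have hsummable : Summable (fun k : ℕ => (1/2:ℝ)^(k+1) *
        |dist y (xs k)/(1 + dist y (xs k)) - dist z (xs k)/(1 + dist z (xs k))|) := by
      apply Summable.of_nonneg_of_le (fun k => by positivity) (fun k => ?_) summable_geometric_two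
      have h1 : |dist y (xs k)/(1 + dist y (xs k)) - dist z (xs k)/(1 + dist z (xs k))| ≤ 2 := by
        have hy1 : dist y (xs k)/(1 + dist y (xs k)) ≤ 1 := by
          rw [div_le_one (by positivity)]; linarith [dist_nonneg (x := y) (y := xs k)]
        have hz1 : dist z (xs k)/(1 + dist z (xs k)) ≤ 1 := by
          rw [div_le_one (by positivity)]; linarith [dist_nonneg (x := z) (y := xs k)]
        have hy0 : 0 ≤ dist y (xs k)/(1 + dist y (xs k)) := by positivity
        have hz0 : 0 ≤ dist z (xs k)/(1 + dist z (xs k)) := by positivity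
        rw [abs_le]
        constructor <;> linarith
      calc (1/2:ℝ)^(k+1) * |dist y (xs k)/(1 + dist y (xs k)) - dist z (xs k)/(1 + dist z (xs k))|
          ≤ (1/2:ℝ)^(k+1) * 2 := mul_le_mul_of_nonneg_left h1 (by positivity)
      _ = (1/2:ℝ)^k := by rw [pow_succ]; ring
    have hterm : (1/2:ℝ)^(m i + 1) * |a/(1+a) - b/(1+b)| ≤ dtilde xs y z :=
      Summable.le_tsum hsummable (m i) (fun j _ => by positivity)
    have hmono : ((1/2:ℝ))^(N+1) ≤ (1/2:ℝ)^(m i + 1) :=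
      pow_le_pow_of_le_one (by norm_num) (by norm_num)
        (Nat.succ_le_succ (Finset.le_sup (Finset.mem_univ i)))
    have habspos : (0:ℝ) ≤ |a/(1+a) - b/(1+b)| := abs_nonneg _
    have hfd : |a/(1+a) - b/(1+b)| ≤ 2^(N+1) * dtilde xs y z := by
      have h1 : (1/2:ℝ)^(N+1) * |a/(1+a) - b/(1+b)| ≤ dtilde xs y z :=
        le_trans (mul_le_mul_of_nonneg_right hmono habspos) hterm
      have h2 : (2:ℝ)^(N+1) * ((1/2:ℝ)^(N+1) * |a/(1+a) - b/(1+b)|) ≤ 2^(N+1) * dtilde xs y z :=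
        mul_le_mul_of_nonneg_left h1 (by positivity)
      calc |a/(1+a) - b/(1+b)| = (2:ℝ)^(N+1) * ((1/2:ℝ)^(N+1) * |a/(1+a) - b/(1+b)|) := by
            rw [← mul_assoc, ← mul_pow]
            norm_num
      _ ≤ _ := h2
    calc dist y z ≤ 3 * Real.sqrt n * |a - b| := hsep
    _ ≤ 3 * Real.sqrt n * ((1 + M)^2 * |a/(1+a) - b/(1+b)|) :=
        mul_le_mul_of_nonneg_left (fdiff ha0 hb0 haM hbM) (by positivity)
    _ ≤ 3 * Real.sqrt n * ((1 + M)^2 * (2^(N+1) * dtilde xs y z)) := by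
        apply mul_le_mul_of_nonneg_left _ (by positivity)
        exact mul_le_mul_of_nonneg_left hfd (by positivity)
    _ = 3 * Real.sqrt n * (1 + M)^2 * 2^(N+1) * dtilde xs y z := by ring
end

section
/- Let E be a metric space with the Heine–Borel property (closed bounded sets are compact) and {y_k} a sequence in E that is Cauchy with respect to the metric d̃(x, y) := Σ_{n=1}^∞ 2^{-n} |d(x, x_n)/(1 + d(x, x_n)) − d(y, x_n)/(1 + d(y, x_n))| (for {x_n} dense in E). Then either {y_k} converges in E with respect to d, or d(y_k, y) → ∞ for every y ∈ E. -/
open Filter Metric Topology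

section OneAddDiv

variable {a b : ℝ}

lemma div_one_add_nonneg (ha : 0 ≤ a) : 0 ≤ a / (1 + a) := by positivity

lemma div_one_add_lt_one (ha : 0 ≤ a) : a / (1 + a) < 1 := by
  rw [div_lt_one (by positivity)]; linarith

lemma div_one_add_lt_div_one_add (ha : 0 ≤ a) (hab : a < b) : a / (1 + a) < b / (1 + b) := by
  rw [div_lt_div_iff₀ (by linarith) (by linarith)]; linarith

lemma div_one_add_le_div_one_add (ha : 0 ≤ a) (hab : a ≤ b) : a / (1 + a) ≤ b / (1 + b) := by
  rw [div_le_div_iff₀ (by linarith) (by linarith)]; linarith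

lemma abs_div_one_add_sub_div_one_add_le (ha : 0 ≤ a) (hb : 0 ≤ b) :
    |a / (1 + a) - b / (1 + b)| ≤ |a - b| := by
  have hprod : 1 ≤ (1 + a) * (1 + b) := by nlinarith
  rw [div_sub_div _ _ (by positivity) (by positivity),
    show a * (1 + b) - (1 + a) * b = a - b by ring, abs_div,
    abs_of_pos (by positivity : (0:ℝ) < (1 + a) * (1 + b))]
  exact div_le_self (abs_nonneg _) hprod

lemma abs_div_one_add_sub_div_one_add_le_one (ha : 0 ≤ a) (hb : 0 ≤ b) :
    |a / (1 + a) - b / (1 + b)| ≤ 1 := by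
  have := div_one_add_nonneg ha; have := div_one_add_lt_one ha
  have := div_one_add_nonneg hb; have := div_one_add_lt_one hb
  rw [abs_le]; constructor <;> linarith

end OneAddDiv

section Dtilde

variable {E : Type*} [MetricSpace E] (xs : ℕ → E)

noncomputable def dtildeTerm (n : ℕ) (x y : E) : ℝ :=
  (1/2 : ℝ)^(n+1) * |dist x (xs n) / (1 + dist x (xs n)) - dist y (xs n) / (1 + dist y (xs n))|

lemma dtilde_eq_tsum_dtildeTerm (x y : E) : dtilde xs x y = ∑' n, dtildeTerm xs n x y := rfl

lemma dtildeTerm_nonneg (n : ℕ) (x y : E) : 0 ≤ dtildeTerm xs n x y := by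
  unfold dtildeTerm; positivity

lemma dtildeTerm_le_half_pow (n : ℕ) (x y : E) : dtildeTerm xs n x y ≤ (1/2 : ℝ)^(n+1) :=
  mul_le_of_le_one_right (by positivity)
    (abs_div_one_add_sub_div_one_add_le_one dist_nonneg dist_nonneg)

lemma dtildeTerm_le_half_pow_mul_dist (n : ℕ) (x y : E) :
    dtildeTerm xs n x y ≤ (1/2 : ℝ)^(n+1) * dist x y := by
  refine mul_le_mul_of_nonneg_left ?_ (by positivity)
  exact (abs_div_one_add_sub_div_one_add_le dist_nonneg dist_nonneg).trans
    (abs_dist_sub_le x y (xs n))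

lemma dtildeTerm_triangle (n : ℕ) (x y z : E) :
    dtildeTerm xs n x z ≤ dtildeTerm xs n x y + dtildeTerm xs n y z := by
  unfold dtildeTerm
  rw [← mul_add]
  exact mul_le_mul_of_nonneg_left (abs_sub_le _ _ _) (by positivity)

lemma summable_half_pow_succ : Summable (fun n : ℕ => (1/2 : ℝ)^(n+1)) :=
  (summable_geometric_two).comp_injective (add_left_injective 1)

lemma tsum_half_pow_succ : ∑' n : ℕ, (1/2 : ℝ)^(n+1) = 1 := by
  simp only [pow_succ', tsum_mul_left, tsum_geometric_two]; norm_num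

lemma summable_dtildeTerm (x y : E) : Summable (fun n => dtildeTerm xs n x y) :=
  summable_half_pow_succ.of_nonneg_of_le (dtildeTerm_nonneg xs · x y)
    (dtildeTerm_le_half_pow xs · x y)

lemma dtilde_nonneg (x y : E) : 0 ≤ dtilde xs x y :=
  tsum_nonneg (dtildeTerm_nonneg xs · x y)

lemma dtildeTerm_le_dtilde (n : ℕ) (x y : E) : dtildeTerm xs n x y ≤ dtilde xs x y :=
  (summable_dtildeTerm xs x y).le_tsum n fun m _ => dtildeTerm_nonneg xs m x y

lemma dtilde_le_dist (x y : E) : dtilde xs x y ≤ dist x y := by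
  calc dtilde xs x y ≤ ∑' n : ℕ, (1/2 : ℝ)^(n+1) * dist x y :=
        (summable_dtildeTerm xs x y).tsum_le_tsum (dtildeTerm_le_half_pow_mul_dist xs · x y)
          (summable_half_pow_succ.mul_right _)
    _ = dist x y := by rw [tsum_mul_right, tsum_half_pow_succ, one_mul]

lemma dtilde_triangle (x y z : E) : dtilde xs x z ≤ dtilde xs x y + dtilde xs y z := by
  simp only [dtilde_eq_tsum_dtildeTerm]
  rw [← (summable_dtildeTerm xs x y).tsum_add (summable_dtildeTerm xs y z)]
  exact (summable_dtildeTerm xs x z).tsum_le_tsum (dtildeTerm_triangle xs · x y z)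
    ((summable_dtildeTerm xs x y).add (summable_dtildeTerm xs y z))

lemma exists_pos_forall_dtilde_lt_imp_dist_lt (hxs : DenseRange xs) (z : E) {ε : ℝ}
    (hε : 0 < ε) : ∃ c > 0, ∀ x, dtilde xs x z < c → dist x z < ε := by
  obtain ⟨n, hn⟩ := hxs.exists_dist_lt z (show 0 < ε / 3 by positivity)
  set gap := (2 * ε / 3) / (1 + 2 * ε / 3) - (ε / 3) / (1 + ε / 3)
  have hgap : 0 < gap := sub_pos.2 (div_one_add_lt_div_one_add (by positivity) (by linarith))
  refine ⟨(1/2 : ℝ)^(n+1) * gap, by positivity, fun x hx => ?_⟩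
  by_contra! hxz
  have hxn : 2 * ε / 3 ≤ dist x (xs n) := by
    linarith [dist_triangle x (xs n) z, dist_comm z (xs n)]
  have hterm : (1/2 : ℝ)^(n+1) * gap ≤ dtildeTerm xs n x z := by
    refine mul_le_mul_of_nonneg_left ((le_abs_self _).trans' ?_) (by positivity)
    have := div_one_add_le_div_one_add (by positivity) hxn
    have := div_one_add_le_div_one_add dist_nonneg hn.le
    linarith
  linarith [dtildeTerm_le_dtilde xs n x z]

lemma tendsto_nhds_of_tendsto_dtilde (hxs : DenseRange xs) {ι : Type*} {l : Filter ι}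
    {f : ι → E} {z : E} (hf : Tendsto (fun i => dtilde xs (f i) z) l (𝓝 0)) :
    Tendsto f l (𝓝 z) := by
  refine Metric.tendsto_nhds.2 fun ε hε => ?_
  obtain ⟨c, hc, hdist⟩ := exists_pos_forall_dtilde_lt_imp_dist_lt xs hxs z hε
  exact (hf.eventually (gt_mem_nhds hc)).mono fun i hi => hdist _ hi

lemma tendsto_dtilde_of_cauchy_of_subseq {y : ℕ → E}
    (hy : ∀ ε > (0:ℝ), ∃ N, ∀ j ≥ N, ∀ k ≥ N, dtilde xs (y j) (y k) < ε)
    {σ : ℕ → ℕ} (hσ : StrictMono σ) {z : E} (hz : Tendsto (y ∘ σ) atTop (𝓝 z)) :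
    Tendsto (fun k => dtilde xs (y k) z) atTop (𝓝 0) := by
  refine Metric.tendsto_atTop.2 fun ε hε => ?_
  obtain ⟨N, hN⟩ := hy (ε / 2) (by positivity)
  obtain ⟨i, hiN, hiz⟩ := ((hσ.tendsto_atTop.eventually_ge_atTop N).and
    (Metric.tendsto_nhds.1 hz (ε / 2) (by positivity))).exists
  refine ⟨N, fun k hk => ?_⟩
  rw [Real.dist_0_eq_abs, abs_of_nonneg (dtilde_nonneg xs _ _)]
  calc dtilde xs (y k) z ≤ dtilde xs (y k) (y (σ i)) + dtilde xs (y (σ i)) z :=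
        dtilde_triangle xs _ _ _
    _ < ε / 2 + ε / 2 := add_lt_add (hN k hk _ hiN) ((dtilde_le_dist xs _ _).trans_lt hiz)
    _ = ε := add_halves ε

end Dtilde

/-- in a metric space with the Heine–Borel property (closed bounded
sets are compact, i.e. a proper space), any sequence which is Cauchy for `d̃`
either converges in `E`, or escapes to infinity: `d(y_k, y) → ∞` for every `y`. -/
theorem stmt4 {E : Type*} [MetricSpace E] [ProperSpace E]
    (xs : ℕ → E) (hxs : DenseRange xs) (y : ℕ → E)
    (hCauchy : ∀ ε > (0:ℝ), ∃ N, ∀ j ≥ N, ∀ k ≥ N, dtilde xs (y j) (y k) < ε) :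
    (∃ z : E, Filter.Tendsto y Filter.atTop (nhds z)) ∨
      (∀ z : E, Filter.Tendsto (fun k => dist (y k) z) Filter.atTop Filter.atTop) := by
  refine or_iff_not_imp_right.2 fun hesc => ?_
  obtain ⟨z, hz⟩ := not_forall.1 hesc
  obtain ⟨b, hb⟩ : ∃ b, ∃ᶠ k in atTop, y k ∈ closedBall z b := by
    simp only [Filter.tendsto_atTop, not_forall, not_eventually, not_le] at hz
    obtain ⟨b, hb⟩ := hz
    exact ⟨b, hb.mono fun k hk => mem_closedBall.2 hk.le⟩
  obtain ⟨w, -, σ, hσ, hyσ⟩ := tendsto_subseq_of_frequently_bounded isBounded_closedBall hb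
  exact ⟨w, tendsto_nhds_of_tendsto_dtilde xs hxs
    (tendsto_dtilde_of_cauchy_of_subseq xs hCauchy hσ hyσ)⟩
end
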